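/- Let $\mathbf{C}$ be an origin-symmetric convex body in $\mathbb{E}^d$, $\rho\geq 1$, and suppose $n \geq \frac{4^d\,\delta_{\rm sep}(\rho,\mathbf{C})\,\rho^d R(\mathbf{C})^d}{r(\mathbf{C})^d}$. Then, writing $R=R_{\mathbf{C}}(\rho,n)$ and $t=R+2\rho R(\mathbf{C})$, one has $R+\rho R(\mathbf{C}) \leq \left(\frac{\mathrm{vol}_d(\mathbf{C})\,n}{\delta_{\rm sep}(\rho,\mathbf{C})\,\kappa_d}\right)^{1/d}\left(1+\frac{2\,\delta_{\rm sep}(\rho,\mathbf{C})^{1/d}\,\rho R(\mathbf{C})}{r(\mathbf{C})}\cdot\frac{1}{n^{1/d}}\right)$. -/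

import Mathlib

open MeasureTheory Filter Set Pointwise

noncomputable section

abbrev Euc (d : ℕ) := EuclideanSpace ℝ (Fin d)

/-- A convex body: compact convex set with nonempty interior. -/
def IsConvexBody {d : ℕ} (K : Set (Euc d)) : Prop :=
  IsCompact K ∧ Convex ℝ K ∧ (interior K).Nonempty

/-- The translate `c + C` of a set `C`. -/
def translateBody {d : ℕ} (c : Euc d) (C : Set (Euc d)) : Set (Euc d) := (c + ·) '' C

/-- Inradius: radius of the largest ball contained in `K`. -/
def inradius {d : ℕ} (K : Set (Euc d)) : ℝ :=
  sSup {r : ℝ | ∃ p, Metric.closedBall p r ⊆ K}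

/-- Circumradius of an origin-symmetric body: smallest radius of an origin-centered
ball containing `C`. -/
def circumradius {d : ℕ} (C : Set (Euc d)) : ℝ :=
  sInf {R : ℝ | 0 ≤ R ∧ C ⊆ Metric.closedBall 0 R}

/-- Volume of the `n`-dimensional Euclidean unit ball. -/
def kappa (n : ℕ) : ℝ := (volume (Metric.closedBall (0 : Euc n) 1)).toReal

/-- The axis-parallel cube of edge length `2·lam` centered at the origin. -/
def cubeW (d : ℕ) (lam : ℝ) : Set (Euc d) := {x | ∀ k, |x k| ≤ lam}

/-- A translative packing of `C` with set of centers `Λ`: translates have pairwise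
disjoint interiors. -/
def IsPacking {d : ℕ} (C : Set (Euc d)) (Λ : Set (Euc d)) : Prop :=
  Λ.Pairwise fun a b => Disjoint (interior (translateBody a C)) (interior (translateBody b C))

/-- `A` and `B` are separated by a hyperplane disjoint from the interior of every
member of the family `F`. -/
def SeparatedByHyperplane {d : ℕ} (A B : Set (Euc d)) (F : Set (Set (Euc d))) : Prop :=
  ∃ (f : Euc d →L[ℝ] ℝ) (t : ℝ), f ≠ 0 ∧ (∀ x ∈ A, f x ≤ t) ∧ (∀ x ∈ B, t ≤ f x) ∧
    ∀ S ∈ F, ∀ x ∈ interior S, f x ≠ t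

/-- A family of sets is totally separable if any two of its members can be separated
by a hyperplane disjoint from the interiors of all members. -/
def TotallySeparable {d : ℕ} (F : Set (Set (Euc d))) : Prop :=
  ∀ A ∈ F, ∀ B ∈ F, A ≠ B → SeparatedByHyperplane A B F

/-- A `ρ`-separable packing: a translative packing such that for each center `c`,
the sub-packing of translates contained in `c + ρ•C` is totally separable. -/
def IsSepPacking {d : ℕ} (ρ : ℝ) (C : Set (Euc d)) (Λ : Set (Euc d)) : Prop :=
  IsPacking C Λ ∧ ∀ c ∈ Λ,
    TotallySeparable {S | ∃ c' ∈ Λ, S = translateBody c' C ∧ S ⊆ translateBody c (ρ • C)}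

/-- Upper density of the packing with centers `Λ`, computed over growing cubes. -/
def packDensity {d : ℕ} (C Λ : Set (Euc d)) : ℝ :=
  limsup (fun lam : ℝ =>
    (volume (⋃ c ∈ {c ∈ Λ | translateBody c C ⊆ cubeW d lam}, translateBody c C)).toReal
      / (volume (cubeW d lam)).toReal) atTop

/-- Optimal density of translative packings of `C`. -/
def deltaPack {d : ℕ} (C : Set (Euc d)) : ℝ :=
  sSup {x | ∃ Λ, IsPacking C Λ ∧ x = packDensity C Λ}

/-- Optimal density of totally separable translative packings of `C`. -/
def deltaSepTotal {d : ℕ} (C : Set (Euc d)) : ℝ :=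
  sSup {x | ∃ Λ, IsPacking C Λ ∧ TotallySeparable ((translateBody · C) '' Λ) ∧
    x = packDensity C Λ}

/-- Optimal density of `ρ`-separable translative packings of `C`. -/
def deltaSep {d : ℕ} (ρ : ℝ) (C : Set (Euc d)) : ℝ :=
  sSup {x | ∃ Λ, IsSepPacking ρ C Λ ∧ x = packDensity C Λ}

/-- A finite `ρ`-separable packing of translates of `C` with centers `c i`. -/
def IsFinSepPacking {d : ℕ} (ρ : ℝ) (C : Set (Euc d)) {n : ℕ} (c : Fin n → Euc d) : Prop :=
  (∀ i j, i ≠ j → Disjoint (interior (translateBody (c i) C)) (interior (translateBody (c j) C))) ∧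
  ∀ i, TotallySeparable {S | ∃ j, S = translateBody (c j) C ∧ S ⊆ translateBody (c i) (ρ • C)}

/-- The largest `n` such that some `ρ`-separable packing of `n` translates of `C`
has all centers in `K`. -/
def nuSep {d : ℕ} (ρ : ℝ) (C K : Set (Euc d)) : ℕ :=
  sSup {n : ℕ | ∃ c : Fin n → Euc d, IsFinSepPacking ρ C c ∧ ∀ i, c i ∈ K}

/-- The smallest radius `R > 0` such that a ball of radius `R` contains the centers of
some `ρ`-separable packing of `n` translates of `C`. -/
def RSep {d : ℕ} (ρ : ℝ) (C : Set (Euc d)) (n : ℕ) : ℝ :=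
  sInf {R : ℝ | 0 < R ∧ n ≤ nuSep ρ C (Metric.closedBall (0 : Euc d) R)}

/-- The `j`-th coefficient of the Steiner polynomial `t ↦ vol(K + t B)`, recovered by
Lagrange interpolation at `t = 0, 1, …, d`. -/
def steinerCoeff {d : ℕ} (K : Set (Euc d)) (j : ℕ) : ℝ :=
  (Lagrange.interpolate (Finset.range (d + 1)) (fun k : ℕ => (k : ℝ))
    (fun k : ℕ => (volume (K + (k : ℝ) • Metric.closedBall (0 : Euc d) 1)).toReal)).coeff j

/-- The mean `i`-dimensional projection `M_i(K) = (κ_i/κ_d) V(K[i], B[d-i])`, with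
`M_d(K) = vol_d(K)`.  Here `V(K[i],B[d-i])` is recovered from the Steiner polynomial:
`vol(K + tB) = Σ_j (d choose j) V(K[d-j],B[j]) t^j`. -/
def meanProj {d : ℕ} (i : ℕ) (K : Set (Euc d)) : ℝ :=
  if i = d then (volume K).toReal
  else kappa i / kappa d * (steinerCoeff K (d - i) / (d.choose (d - i)))

/-- Surface area of `Q`: the `(d-1)`-dimensional Hausdorff measure of its boundary. -/
def surfArea {d : ℕ} (Q : Set (Euc d)) : ℝ :=
  (MeasureTheory.Measure.hausdorffMeasure ((d : ℝ) - 1) (frontier Q)).toReal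

end

/-!
There are `ρ`-separable packings of density arbitrarily close to `δ_sep(ρ, C)`; in a large
cube `Q` such a packing has more than `(δ_sep - ε) vol(Q) / vol(C)` translates. Averaging over `Q`
the number of these centres in a ball of radius `R` shows that, as soon as
`(n - 1) vol(C) < δ_sep κ_d R^d`, some ball of radius `R` contains `n` centres, so
`R_C(ρ, n) ≤ R`; taking `R^d = vol(C) n / (δ_sep κ_d)` bounds the first summand. The second
one, `ρ R(C)`, is dominated by the correction term because `vol(C) ≥ κ_d r(C)^d`. Finally
`δ_sep > 0` because the translates of `C` centred at `2R(C) ℤ^d` form a totally separable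
packing, separated by coordinate hyperplanes.
-/

open Metric

variable {d : ℕ}

section Translates

lemma volume_translateBody (c : Euc d) (A : Set (Euc d)) :
    volume (translateBody c A) = volume A :=
  measure_vadd volume c A

lemma interior_translateBody (c : Euc d) (A : Set (Euc d)) :
    interior (translateBody c A) = translateBody c (interior A) :=
  interior_vadd c A

lemma translateBody_translateBody (a b : Euc d) (A : Set (Euc d)) :
    translateBody a (translateBody b A) = translateBody (a + b) A :=
  vadd_vadd a b A

end Translates

lemma abs_apply_le_norm (x : Euc d) (k : Fin d) : |x k| ≤ ‖x‖ := by
  simpa only [Real.norm_eq_abs] using PiLp.norm_apply_le x k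

section Body

variable {C : Set (Euc d)}

lemma subset_closedBall_circumradius (hC : IsCompact C) :
    C ⊆ closedBall 0 (circumradius C) := by
  obtain ⟨M, hM⟩ := hC.isBounded.subset_closedBall 0
  have hne : {R : ℝ | 0 ≤ R ∧ C ⊆ closedBall 0 R}.Nonempty :=
    ⟨max M 0, le_max_right _ _, hM.trans (closedBall_subset_closedBall (le_max_left _ _))⟩
  intro x hx
  rw [mem_closedBall_zero_iff]
  exact le_csInf hne fun R hR => mem_closedBall_zero_iff.1 (hR.2 hx)

lemma circumradius_nonneg (C : Set (Euc d)) : 0 ≤ circumradius C :=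
  Real.sInf_nonneg fun _ hR => hR.1

lemma abs_apply_le_circumradius (hC : IsCompact C) {x : Euc d} (hx : x ∈ C) (k : Fin d) :
    |x k| ≤ circumradius C :=
  (abs_apply_le_norm x k).trans (mem_closedBall_zero_iff.1 (subset_closedBall_circumradius hC hx))

lemma kappa_pos : 0 < kappa d :=
  ENNReal.toReal_pos (measure_closedBall_pos volume _ one_pos).ne' measure_closedBall_lt_top.ne

lemma volume_closedBall_toReal (x : Euc d) {R : ℝ} (hR : 0 ≤ R) :
    (volume (closedBall x R)).toReal = kappa d * R ^ d := by
  rw [Measure.addHaar_closedBall' volume x hR, ENNReal.toReal_mul,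
    ENNReal.toReal_ofReal (by positivity), finrank_euclideanSpace_fin, kappa, mul_comm]

lemma volume_interior_of_isConvexBody (hC : IsConvexBody C) : volume (interior C) = volume C :=
  measure_interior_of_null_frontier (hC.2.1.addHaar_frontier volume)

lemma volume_toReal_pos (hC : IsConvexBody C) : 0 < (volume C).toReal :=
  ENNReal.toReal_pos ((isOpen_interior.measure_pos volume hC.2.2).trans_le
    (measure_mono interior_subset)).ne' hC.1.measure_lt_top.ne

lemma le_volume_div_kappa_rpow_of_closedBall_subset (hd : d ≠ 0) (hC : IsCompact C)
    {p : Euc d} {r : ℝ} (h : closedBall p r ⊆ C) :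
    r ≤ ((volume C).toReal / kappa d) ^ ((1 : ℝ) / d) := by
  rcases lt_or_ge r 0 with hr | hr
  · exact hr.le.trans (Real.rpow_nonneg (div_nonneg ENNReal.toReal_nonneg kappa_pos.le) _)
  have hvol : kappa d * r ^ d ≤ (volume C).toReal := by
    rw [← volume_closedBall_toReal p hr]
    exact ENNReal.toReal_mono hC.measure_lt_top.ne (measure_mono h)
  calc r = (r ^ d) ^ ((1 : ℝ) / d) := by rw [one_div, Real.pow_rpow_inv_natCast hr hd]
    _ ≤ ((volume C).toReal / kappa d) ^ ((1 : ℝ) / d) := by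
      gcongr
      rw [le_div_iff₀ kappa_pos, mul_comm]
      exact hvol

lemma inradius_le (hd : d ≠ 0) (hC : IsCompact C) :
    inradius C ≤ ((volume C).toReal / kappa d) ^ ((1 : ℝ) / d) :=
  csSup_le ⟨-1, 0, by simp⟩ fun _ ⟨_, hp⟩ =>
    le_volume_div_kappa_rpow_of_closedBall_subset hd hC hp

lemma inradius_pos (hd : d ≠ 0) (hC : IsConvexBody C) : 0 < inradius C := by
  obtain ⟨p, hp⟩ := hC.2.2
  obtain ⟨ε, hε, hball⟩ := Metric.isOpen_iff.1 isOpen_interior p hp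
  have hsub : closedBall p (ε / 2) ⊆ C :=
    ((closedBall_subset_ball (half_lt_self hε)).trans hball).trans interior_subset
  have hbdd : BddAbove {r : ℝ | ∃ p, closedBall p r ⊆ C} :=
    ⟨_, fun _ ⟨_, hq⟩ => le_volume_div_kappa_rpow_of_closedBall_subset hd hC.1 hq⟩
  exact (half_pos hε).trans_le (le_csSup hbdd ⟨p, hsub⟩)

lemma circumradius_pos (hd : d ≠ 0) (hC : IsConvexBody C) : 0 < circumradius C := by
  have hV : (volume C).toReal ≤ kappa d * circumradius C ^ d := by
    rw [← volume_closedBall_toReal 0 (circumradius_nonneg C)]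
    exact ENNReal.toReal_mono measure_closedBall_lt_top.ne
      (measure_mono (subset_closedBall_circumradius hC.1))
  refine (circumradius_nonneg C).lt_of_ne fun h => ?_
  rw [← h, zero_pow hd, mul_zero] at hV
  exact (volume_toReal_pos hC).not_ge hV

end Body

section Counting

open scoped ENNReal

variable {C : Set (Euc d)} {S : Set (Euc d)}

lemma card_mul_volume_le {ι : Type*} (hC : IsConvexBody C) (hS : volume S ≠ ⊤)
    {s : Finset ι} {c : ι → Euc d}
    (hdisj : (s : Set ι).PairwiseDisjoint fun i => interior (translateBody (c i) C))
    (hsub : ∀ i ∈ s, translateBody (c i) C ⊆ S) :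
    (s.card : ℝ) * (volume C).toReal ≤ (volume S).toReal := by
  have h : (s.card : ℝ≥0∞) * volume C ≤ volume S :=
    calc (s.card : ℝ≥0∞) * volume C
      _ = ∑ i ∈ s, volume (interior (translateBody (c i) C)) := by
          simp [interior_translateBody, volume_translateBody, volume_interior_of_isConvexBody hC]
      _ = volume (⋃ i ∈ s, interior (translateBody (c i) C)) :=
          (measure_biUnion_finset hdisj fun _ _ => isOpen_interior.measurableSet).symm
      _ ≤ volume S :=
          measure_mono (Set.iUnion₂_subset fun i hi => interior_subset.trans (hsub i hi))
  simpa only [ENNReal.toReal_mul, ENNReal.toReal_natCast] using ENNReal.toReal_mono hS h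

lemma card_le_of_pairwiseDisjoint {ι : Type*} (hC : IsConvexBody C) (hS : volume S ≠ ⊤)
    {s : Finset ι} {c : ι → Euc d}
    (hdisj : (s : Set ι).PairwiseDisjoint fun i => interior (translateBody (c i) C))
    (hsub : ∀ i ∈ s, translateBody (c i) C ⊆ S) :
    s.card ≤ ⌈(volume S).toReal / (volume C).toReal⌉₊ := by
  have h := card_mul_volume_le hC hS hdisj hsub
  rw [← le_div_iff₀ (volume_toReal_pos hC)] at h
  exact_mod_cast h.trans (Nat.le_ceil _)

lemma IsPacking.finite_subset (hC : IsConvexBody C) {Λ : Set (Euc d)} (hΛ : IsPacking C Λ)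
    (hS : volume S ≠ ⊤) : {c ∈ Λ | translateBody c C ⊆ S}.Finite := by
  by_contra hinf
  obtain ⟨t, hts, htcard⟩ := Set.Infinite.exists_subset_card_eq hinf
    (⌈(volume S).toReal / (volume C).toReal⌉₊ + 1)
  have := card_le_of_pairwiseDisjoint hC hS (s := t) (c := id)
    (fun a ha b hb hab => hΛ (hts ha).1 (hts hb).1 hab) fun a ha => (hts ha).2
  omega

lemma translateBody_subset_closedBall (hC : IsCompact C) {c : Euc d} {R : ℝ}
    (hc : c ∈ closedBall 0 R) : translateBody c C ⊆ closedBall 0 (R + circumradius C) := by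
  rintro _ ⟨z, hz, rfl⟩
  rw [mem_closedBall_zero_iff] at hc ⊢
  exact (norm_add_le c z).trans
    (add_le_add hc (mem_closedBall_zero_iff.1 (subset_closedBall_circumradius hC hz)))

lemma le_nuSep (hC : IsConvexBody C) {ρ R : ℝ} {n : ℕ} {c : Fin n → Euc d}
    (hc : IsFinSepPacking ρ C c) (hR : ∀ i, c i ∈ closedBall 0 R) :
    n ≤ nuSep ρ C (closedBall 0 R) := by
  refine le_csSup ⟨⌈(volume (closedBall (0 : Euc d) (R + circumradius C))).toReal /
    (volume C).toReal⌉₊, ?_⟩ ⟨c, hc, hR⟩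
  rintro m ⟨c', hc', hR'⟩
  simpa using card_le_of_pairwiseDisjoint hC measure_closedBall_lt_top.ne (s := Finset.univ)
    (fun i _ j _ hij => hc'.1 i j hij) fun i _ => translateBody_subset_closedBall hC.1 (hR' i)

end Counting

section Cube

variable {C : Set (Euc d)}

lemma cubeW_eq_preimage (lam : ℝ) :
    cubeW d lam =
      (MeasurableEquiv.toLp 2 (Fin d → ℝ)).symm ⁻¹' Set.univ.pi fun _ => Set.Icc (-lam) lam := by
  ext x
  simp [cubeW, abs_le, Pi.le_def, forall_and]

lemma volume_cubeW (lam : ℝ) : volume (cubeW d lam) = ENNReal.ofReal (2 * lam) ^ d := by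
  rw [cubeW_eq_preimage,
    (EuclideanSpace.volume_preserving_symm_measurableEquiv_toLp _).measure_preimage
      (MeasurableSet.univ_pi fun _ => measurableSet_Icc).nullMeasurableSet, volume_pi_pi]
  simp [Real.volume_Icc, two_mul]

lemma volume_cubeW_ne_top (lam : ℝ) : volume (cubeW d lam) ≠ ⊤ := by
  rw [volume_cubeW]
  exact ENNReal.pow_ne_top ENNReal.ofReal_ne_top

lemma volume_cubeW_toReal {lam : ℝ} (h : 0 ≤ lam) :
    (volume (cubeW d lam)).toReal = (2 * lam) ^ d := by
  rw [volume_cubeW, ENNReal.toReal_pow, ENNReal.toReal_ofReal (by positivity)]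

lemma translateBody_subset_cubeW (hC : IsCompact C) {c : Euc d} {L : ℝ}
    (hc : ∀ k, |c k| + circumradius C ≤ L) : translateBody c C ⊆ cubeW d L := by
  rintro _ ⟨z, hz, rfl⟩ k
  calc |c k + z k| ≤ |c k| + |z k| := abs_add_le _ _
    _ ≤ L := by linarith [hc k, abs_apply_le_circumradius hC hz k]

lemma mem_cubeW_of_translateBody_subset (hC : IsCompact C) (hne : C.Nonempty) {c : Euc d}
    {L : ℝ} (hc : translateBody c C ⊆ cubeW d L) : c ∈ cubeW d (L + circumradius C) := by
  obtain ⟨z, hz⟩ := hne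
  intro k
  have hcz : |c k + z k| ≤ L := hc ⟨z, hz, rfl⟩ k
  calc |c k| = |(c k + z k) - z k| := by ring_nf
    _ ≤ |c k + z k| + |z k| := abs_sub _ _
    _ ≤ L + circumradius C := add_le_add hcz (abs_apply_le_circumradius hC hz k)

lemma closedBall_subset_cubeW {c : Euc d} {L R : ℝ} (hc : c ∈ cubeW d L) :
    closedBall c R ⊆ cubeW d (L + R) := by
  intro y hy k
  have hyc : |y k - c k| ≤ R := (abs_apply_le_norm (y - c) k).trans (mem_closedBall_iff_norm.1 hy)
  calc |y k| = |c k + (y k - c k)| := by ring_nf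
    _ ≤ |c k| + |y k - c k| := abs_add_le _ _
    _ ≤ L + R := add_le_add (hc k) hyc

end Cube

section Density

variable {C Λ : Set (Euc d)}

/-- `packDensity C Λ` unfolds to `limsup (densityRatio C Λ) atTop`. -/
noncomputable def densityRatio (C Λ : Set (Euc d)) (lam : ℝ) : ℝ :=
  (volume (⋃ c ∈ {c ∈ Λ | translateBody c C ⊆ cubeW d lam}, translateBody c C)).toReal /
    (volume (cubeW d lam)).toReal

lemma densityRatio_nonneg (lam : ℝ) : 0 ≤ densityRatio C Λ lam := by
  unfold densityRatio
  positivity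

lemma densityRatio_le_one (lam : ℝ) : densityRatio C Λ lam ≤ 1 :=
  div_le_one_of_le₀ (ENNReal.toReal_mono (volume_cubeW_ne_top lam)
    (measure_mono (Set.iUnion₂_subset fun _ hc => hc.2))) ENNReal.toReal_nonneg

lemma isCoboundedUnder_densityRatio :
    IsCoboundedUnder (· ≤ ·) atTop (densityRatio C Λ) :=
  (isBoundedUnder_of ⟨0, densityRatio_nonneg⟩).isCoboundedUnder_le

lemma packDensity_le_one : packDensity C Λ ≤ 1 :=
  limsup_le_of_le isCoboundedUnder_densityRatio (Eventually.of_forall densityRatio_le_one)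

end Density

section Grid

variable {C : Set (Euc d)} {s : ℝ}

def gridSet (d : ℕ) (s : ℝ) : Set (Euc d) := {x | ∀ k, ∃ z : ℤ, x k = s * z}

def gridPt (s : ℝ) (z : Fin d → ℤ) : Euc d := WithLp.toLp 2 fun k => s * z k

lemma gridPt_mem_gridSet (s : ℝ) (z : Fin d → ℤ) : gridPt s z ∈ gridSet d s :=
  fun k => ⟨z k, rfl⟩

lemma gridPt_injective (hs : s ≠ 0) : Function.Injective (gridPt (d := d) s) := by
  intro z z' h
  funext k
  have hk : s * (z k : ℝ) = s * z' k := congrArg (fun v : Euc d => v k) h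
  exact_mod_cast mul_left_cancel₀ hs hk

lemma exists_le_abs_sub_of_mem_gridSet (hs : 0 < s) {a b : Euc d} (ha : a ∈ gridSet d s)
    (hb : b ∈ gridSet d s) (hab : a ≠ b) : ∃ k, s ≤ |a k - b k| := by
  obtain ⟨k, hk⟩ : ∃ k, a k ≠ b k := by
    by_contra! h
    exact hab (PiLp.ext h)
  obtain ⟨za, hza⟩ := ha k
  obtain ⟨zb, hzb⟩ := hb k
  refine ⟨k, ?_⟩
  rw [hza, hzb] at hk ⊢
  have hz : (1 : ℝ) ≤ |((za - zb : ℤ) : ℝ)| := by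
    rw [← Int.cast_abs]
    exact_mod_cast Int.one_le_abs (sub_ne_zero.2 fun h => hk (by rw [h]))
  rw [← mul_sub, abs_mul, abs_of_pos hs, ← Int.cast_sub]
  nlinarith

lemma interior_translateBody_subset (hC : IsCompact C) (c : Euc d) (k : Fin d) :
    interior (translateBody c C) ⊆
      EuclideanSpace.proj k ⁻¹' Set.Ioo (c k - circumradius C) (c k + circumradius C) := by
  have hsub : translateBody c C ⊆
      EuclideanSpace.proj k ⁻¹' Set.Icc (c k - circumradius C) (c k + circumradius C) := by
    rintro _ ⟨z, hz, rfl⟩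
    have := abs_le.1 (abs_apply_le_circumradius hC hz k)
    simp only [Set.mem_preimage, Set.mem_Icc, PiLp.proj_apply, PiLp.add_apply]
    constructor <;> linarith
  refine (interior_mono hsub).trans_eq ?_
  rw [ContinuousLinearMap.interior_preimage _ fun t => ⟨EuclideanSpace.single k t, by simp⟩,
    interior_Icc]

lemma disjoint_interior_translateBody (hC : IsCompact C) {a b : Euc d} {k : Fin d}
    (h : 2 * circumradius C ≤ |a k - b k|) :
    Disjoint (interior (translateBody a C)) (interior (translateBody b C)) := by
  refine Set.disjoint_left.2 fun x hxa hxb => ?_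
  obtain ⟨ha₁, ha₂⟩ := interior_translateBody_subset hC a k hxa
  obtain ⟨hb₁, hb₂⟩ := interior_translateBody_subset hC b k hxb
  simp only [PiLp.proj_apply] at ha₁ ha₂ hb₁ hb₂
  cases abs_cases (a k - b k) <;> linarith

lemma SeparatedByHyperplane.symm {A B : Set (Euc d)} {F : Set (Set (Euc d))}
    (h : SeparatedByHyperplane A B F) : SeparatedByHyperplane B A F := by
  obtain ⟨f, t, hf, hA, hB, hF⟩ := h
  refine ⟨-f, -t, neg_ne_zero.2 hf, fun x hx => ?_, fun x hx => ?_, fun S hS x hx => ?_⟩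
  · simpa using hB x hx
  · simpa using hA x hx
  · simpa using hF S hS x hx

/-- The separating hyperplane `x k = a k + s / 2` lies halfway between two layers of the grid,
so it misses the interiors of all grid translates. -/
lemma separatedByHyperplane_of_mem_gridSet (hC : IsCompact C) (hs : 0 < s)
    (h2s : 2 * circumradius C ≤ s)
    {a b : Euc d} (ha : a ∈ gridSet d s) {k : Fin d} (hk : a k + s ≤ b k)
    {F : Set (Set (Euc d))} (hF : ∀ S ∈ F, ∃ c ∈ gridSet d s, S = translateBody c C) :
    SeparatedByHyperplane (translateBody a C) (translateBody b C) F := by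
  refine ⟨EuclideanSpace.proj k, a k + s / 2, fun h => ?_, ?_, ?_, ?_⟩
  · simpa using congrArg (fun f => f (EuclideanSpace.single k 1)) h
  · rintro _ ⟨z, hz, rfl⟩
    have := abs_le.1 (abs_apply_le_circumradius hC hz k)
    simp only [PiLp.proj_apply, PiLp.add_apply]
    linarith
  · rintro _ ⟨z, hz, rfl⟩
    have := abs_le.1 (abs_apply_le_circumradius hC hz k)
    simp only [PiLp.proj_apply, PiLp.add_apply]
    linarith
  · rintro _ hS x hx hxk
    obtain ⟨c, hc, rfl⟩ := hF _ hS
    obtain ⟨h₁, h₂⟩ := interior_translateBody_subset hC c k hx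
    obtain ⟨za, hza⟩ := ha k
    obtain ⟨zc, hzc⟩ := hc k
    simp only [PiLp.proj_apply] at h₁ h₂ hxk
    rw [hxk, hza, hzc] at h₁ h₂
    have hlt : ((za - zc : ℤ) : ℝ) < 0 := by
      push_cast
      nlinarith
    have hgt : (-1 : ℝ) < ((za - zc : ℤ) : ℝ) := by
      push_cast
      nlinarith
    have : za - zc < 0 := by exact_mod_cast hlt
    have : -1 < za - zc := by exact_mod_cast hgt
    omega

lemma totallySeparable_of_mem_gridSet (hC : IsCompact C) (hs : 0 < s)
    (h2s : 2 * circumradius C ≤ s) {F : Set (Set (Euc d))}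
    (hF : ∀ S ∈ F, ∃ c ∈ gridSet d s, S = translateBody c C) : TotallySeparable F := by
  intro A hA B hB hAB
  obtain ⟨a, ha, rfl⟩ := hF A hA
  obtain ⟨b, hb, rfl⟩ := hF B hB
  obtain ⟨k, hk⟩ := exists_le_abs_sub_of_mem_gridSet hs ha hb fun h => hAB (h ▸ rfl)
  rcases abs_cases (a k - b k) with ⟨habs, _⟩ | ⟨habs, _⟩ <;> rw [habs] at hk
  · exact (separatedByHyperplane_of_mem_gridSet hC hs h2s hb (by linarith) hF).symm
  · exact separatedByHyperplane_of_mem_gridSet hC hs h2s ha (by linarith) hF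

lemma isSepPacking_gridSet (hC : IsCompact C) (hs : 0 < s) (h2s : 2 * circumradius C ≤ s)
    (ρ : ℝ) : IsSepPacking ρ C (gridSet d s) := by
  refine ⟨fun a ha b hb hab => ?_, fun c _ => ?_⟩
  · obtain ⟨k, hk⟩ := exists_le_abs_sub_of_mem_gridSet hs ha hb hab
    exact disjoint_interior_translateBody hC (h2s.trans hk)
  · exact totallySeparable_of_mem_gridSet hC hs h2s fun S ⟨c', hc', hS, _⟩ => ⟨c', hc', hS⟩

lemma translateBody_gridPt_subset_cubeW (hC : IsCompact C) (hs : 0 ≤ s) {M : ℕ}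
    {z : Fin d → ℤ} (hz : z ∈ Fintype.piFinset fun _ => Finset.Icc (-(M : ℤ)) M) {L : ℝ}
    (hL : M * s + circumradius C ≤ L) : translateBody (gridPt s z) C ⊆ cubeW d L := by
  refine translateBody_subset_cubeW hC fun k => ?_
  have hzk : |(z k : ℝ)| ≤ M := by
    have := Finset.mem_Icc.1 (Fintype.mem_piFinset.1 hz k)
    exact_mod_cast abs_le.2 this
  have : |gridPt s z k| ≤ M * s := by
    change |s * (z k : ℝ)| ≤ M * s
    rw [abs_mul, abs_of_nonneg hs, mul_comm]
    exact mul_le_mul_of_nonneg_right hzk hs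
  linarith

/-- The `(2M+1)^d` grid translates with `|z k| ≤ M = ⌊(L - R(C))/s⌋` lie in the cube, and
`L ≤ (2M+1) s` once `L ≥ 2R(C) + s`. -/
lemma div_le_densityRatio_gridSet (hC : IsConvexBody C) (hs : 0 < s)
    (h2s : 2 * circumradius C ≤ s) {L : ℝ} (hL : 2 * circumradius C + s ≤ L) :
    (volume C).toReal / (2 * s) ^ d ≤ densityRatio C (gridSet d s) L := by
  have hRc := circumradius_nonneg C
  set M : ℕ := ⌊(L - circumradius C) / s⌋₊
  have hMs : (M : ℝ) * s ≤ L - circumradius C :=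
    (le_div_iff₀ hs).1 (Nat.floor_le (div_nonneg (by linarith) hs.le))
  have hLM : L ≤ (2 * M + 1) * s := by
    have h := mul_lt_mul_of_pos_right (Nat.sub_one_lt_floor ((L - circumradius C) / s)) hs
    rw [sub_mul, div_mul_cancel₀ _ hs.ne', one_mul] at h
    linarith
  set box : Finset (Fin d → ℤ) := Fintype.piFinset fun _ => Finset.Icc (-(M : ℤ)) M
  have hcard : (box.card : ℝ) = (2 * M + 1) ^ d := by
    rw [Fintype.card_piFinset, Finset.prod_const, Int.card_Icc, Finset.card_univ,
      Fintype.card_fin, show ((M : ℤ) + 1 - -(M : ℤ)).toNat = 2 * M + 1 by omega]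
    push_cast
    rfl
  set U := ⋃ c ∈ {c ∈ gridSet d s | translateBody c C ⊆ cubeW d L}, translateBody c C
  have hU : volume U ≠ ⊤ := ne_top_of_le_ne_top (volume_cubeW_ne_top L)
    (measure_mono (Set.iUnion₂_subset fun _ hc => hc.2))
  have hcount : (box.card : ℝ) * (volume C).toReal ≤ (volume U).toReal :=
    card_mul_volume_le hC hU
      (fun z _ z' _ hzz' => by
        obtain ⟨k, hk⟩ := exists_le_abs_sub_of_mem_gridSet hs (gridPt_mem_gridSet s z)
          (gridPt_mem_gridSet s z') ((gridPt_injective hs.ne').ne hzz')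
        exact disjoint_interior_translateBody hC.1 (h2s.trans hk))
      fun z hz => Set.subset_biUnion_of_mem (u := fun c => translateBody c C)
        ⟨gridPt_mem_gridSet s z, translateBody_gridPt_subset_cubeW hC.1 hs.le hz (by linarith)⟩
  rw [densityRatio, volume_cubeW_toReal (by linarith), div_le_div_iff₀ (by positivity)
    (pow_pos (by linarith) d)]
  calc (volume C).toReal * (2 * L) ^ d ≤ (volume C).toReal * ((2 * M + 1) * (2 * s)) ^ d :=
        mul_le_mul_of_nonneg_left (pow_le_pow_left₀ (by linarith) (by linarith) d)
          ENNReal.toReal_nonneg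
    _ = (box.card * (volume C).toReal) * (2 * s) ^ d := by rw [hcard, mul_pow]; ring
    _ ≤ (volume U).toReal * (2 * s) ^ d := by gcongr

lemma div_le_packDensity_gridSet (hC : IsConvexBody C) (hs : 0 < s)
    (h2s : 2 * circumradius C ≤ s) :
    (volume C).toReal / (2 * s) ^ d ≤ packDensity C (gridSet d s) :=
  le_limsup_of_frequently_le
    (Eventually.frequently (eventually_ge_atTop _ |>.mono fun _ hL =>
      div_le_densityRatio_gridSet hC hs h2s hL))
    (isBoundedUnder_of ⟨1, densityRatio_le_one⟩)

end Grid

section DeltaSep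

variable {C : Set (Euc d)}

lemma bddAbove_deltaSep_set (ρ : ℝ) (C : Set (Euc d)) :
    BddAbove {x | ∃ Λ, IsSepPacking ρ C Λ ∧ x = packDensity C Λ} :=
  ⟨1, fun _ ⟨_, _, hx⟩ => hx ▸ packDensity_le_one⟩

lemma packDensity_gridSet_le_deltaSep (hd : d ≠ 0) (hC : IsConvexBody C) (ρ : ℝ) :
    packDensity C (gridSet d (2 * circumradius C)) ≤ deltaSep ρ C :=
  le_csSup (bddAbove_deltaSep_set ρ C) ⟨_, isSepPacking_gridSet hC.1
    (mul_pos two_pos (circumradius_pos hd hC)) le_rfl ρ, rfl⟩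

lemma deltaSep_pos (hd : d ≠ 0) (hC : IsConvexBody C) (ρ : ℝ) : 0 < deltaSep ρ C := by
  have hs := mul_pos two_pos (circumradius_pos hd hC)
  exact (div_pos (volume_toReal_pos hC) (by positivity)).trans_le
    ((div_le_packDensity_gridSet hC hs le_rfl).trans (packDensity_gridSet_le_deltaSep hd hC ρ))

lemma exists_isSepPacking_lt_packDensity (hd : d ≠ 0) (hC : IsConvexBody C) {ρ b : ℝ}
    (hb : b < deltaSep ρ C) : ∃ Λ, IsSepPacking ρ C Λ ∧ b < packDensity C Λ := by
  have hne : {x | ∃ Λ, IsSepPacking ρ C Λ ∧ x = packDensity C Λ}.Nonempty :=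
    ⟨_, _, isSepPacking_gridSet hC.1 (mul_pos two_pos (circumradius_pos hd hC)) le_rfl ρ, rfl⟩
  obtain ⟨_, ⟨Λ, hΛ, rfl⟩, h⟩ := exists_lt_of_lt_csSup hne hb
  exact ⟨Λ, hΛ, h⟩

end DeltaSep

section Averaging

open scoped ENNReal

open scoped Classical in
lemma exists_lt_card_filter_mem {α ι : Type*} [MeasurableSpace α] (μ : Measure α)
    {Q : Set α} (T : Finset ι) {B : ι → Set α} (hB : ∀ i ∈ T, MeasurableSet (B i))
    (hBQ : ∀ i ∈ T, B i ⊆ Q) {m : ℕ} (h : m * μ Q < ∑ i ∈ T, μ (B i)) :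
    ∃ x, m < (T.filter fun i => x ∈ B i).card := by
  by_contra! hle
  refine h.not_ge ?_
  calc ∑ i ∈ T, μ (B i) = ∑ i ∈ T, ∫⁻ x in Q, (B i).indicator 1 x ∂μ := by
        refine Finset.sum_congr rfl fun i hi => ?_
        rw [lintegral_indicator_one (hB i hi), Measure.restrict_apply (hB i hi),
          Set.inter_eq_left.2 (hBQ i hi)]
    _ = ∫⁻ x in Q, ((T.filter fun i => x ∈ B i).card : ℝ≥0∞) ∂μ := by
        rw [← lintegral_finsetSum' _ fun i hi =>
          (measurable_one.indicator (hB i hi)).aemeasurable]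
        simp [Set.indicator_apply, Finset.sum_boole]
    _ ≤ ∫⁻ _ in Q, (m : ℝ≥0∞) ∂μ := lintegral_mono fun x => Nat.cast_le.2 (hle x)
    _ = m * μ Q := by rw [setLIntegral_const]

end Averaging

section Separation

variable {A B : Set (Euc d)} {F G : Set (Set (Euc d))}

lemma SeparatedByHyperplane.mono (h : SeparatedByHyperplane A B F) (hGF : G ⊆ F) :
    SeparatedByHyperplane A B G := by
  obtain ⟨f, t, hf, hA, hB, hF⟩ := h
  exact ⟨f, t, hf, hA, hB, fun S hS => hF S (hGF hS)⟩

lemma SeparatedByHyperplane.translateBody (h : SeparatedByHyperplane A B F) (v : Euc d) :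
    SeparatedByHyperplane (translateBody v A) (translateBody v B) (translateBody v '' F) := by
  obtain ⟨f, t, hf, hA, hB, hF⟩ := h
  refine ⟨f, f v + t, hf, ?_, ?_, ?_⟩
  · rintro _ ⟨y, hy, rfl⟩
    simpa using hA y hy
  · rintro _ ⟨y, hy, rfl⟩
    simpa using hB y hy
  · rintro _ ⟨S, hS, rfl⟩ _ hx
    rw [interior_translateBody] at hx
    obtain ⟨y, hy, rfl⟩ := hx
    simpa using hF S hS y hy

lemma TotallySeparable.mono (h : TotallySeparable F) (hGF : G ⊆ F) : TotallySeparable G :=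
  fun A hA B hB hAB => (h A (hGF hA) B (hGF hB) hAB).mono hGF

lemma TotallySeparable.image_translateBody (h : TotallySeparable F) (v : Euc d) :
    TotallySeparable (translateBody v '' F) := by
  rintro _ ⟨A, hA, rfl⟩ _ ⟨B, hB, rfl⟩ hAB
  exact (h A hA B hB fun h => hAB (h ▸ rfl)).translateBody v

end Separation

lemma translateBody_sub (a x : Euc d) (A : Set (Euc d)) :
    translateBody (a - x) A = translateBody (-x) (translateBody a A) := by
  rw [translateBody_translateBody, neg_add_eq_sub]

lemma IsSepPacking.isFinSepPacking_sub {ρ : ℝ} {C Λ : Set (Euc d)} (hΛ : IsSepPacking ρ C Λ)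
    {n : ℕ} {t : Fin n → Euc d} (ht : ∀ i, t i ∈ Λ) (hinj : Function.Injective t)
    (x : Euc d) :
    IsFinSepPacking ρ C fun i => t i - x := by
  refine ⟨fun i j hij => ?_, fun i => ((hΛ.2 (t i) (ht i)).image_translateBody (-x)).mono ?_⟩
  · rw [translateBody_sub, translateBody_sub, interior_translateBody (-x),
      interior_translateBody (-x)]
    exact (Set.disjoint_vadd_set (a := -x)).2 (hΛ.1 (ht i) (ht j) (hinj.ne hij))
  · rintro _ ⟨j, rfl, hj⟩
    simp only [translateBody_sub] at hj ⊢
    exact ⟨_, ⟨t j, ht j, rfl, (Set.vadd_set_subset_vadd_set_iff (a := -x)).1 hj⟩, rfl⟩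

section Radius

variable {C : Set (Euc d)}

lemma exists_cubeW_lt_card_mul_volume (hC : IsConvexBody C) {Λ : Set (Euc d)}
    (hΛ : IsPacking C Λ) (a : ℝ) {b : ℝ} (hb : b < packDensity C Λ) :
    ∃ L > 0, ∃ T : Finset (Euc d), (∀ c ∈ T, c ∈ Λ ∧ translateBody c C ⊆ cubeW d L) ∧
      b * (2 * (L + a)) ^ d < T.card * (volume C).toReal := by
  obtain ⟨b', hbb', hb'⟩ := exists_between hb
  have hfreq : ∃ᶠ L in atTop, b' < densityRatio C Λ L :=
    frequently_lt_of_lt_limsup isCoboundedUnder_densityRatio hb'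
  have hlim : Tendsto (fun L : ℝ => b * (1 + a / L) ^ d) atTop (nhds b) := by
    simpa using ((tendsto_const_nhds.div_atTop tendsto_id).const_add 1).pow d |>.const_mul b
  obtain ⟨L, hratio, hgrowth, hL⟩ :=
    (hfreq.and_eventually ((hlim.eventually (eventually_lt_nhds hbb')).and
      (eventually_gt_atTop 0))).exists
  obtain ⟨T, hT⟩ := (hΛ.finite_subset hC (volume_cubeW_ne_top L)).exists_finset_coe
  refine ⟨L, hL, T, fun c hc => (Set.ext_iff.1 hT c).1 hc, ?_⟩
  have hunion :
      (volume (⋃ c ∈ {c ∈ Λ | translateBody c C ⊆ cubeW d L}, translateBody c C)).toReal ≤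
        T.card * (volume C).toReal := by
    rw [← hT, Finset.set_biUnion_coe]
    refine ENNReal.toReal_le_of_le_ofReal (by positivity) ((measure_biUnion_finset_le _ _).trans ?_)
    simp [volume_translateBody, ENNReal.ofReal_mul, ENNReal.ofReal_toReal hC.1.measure_lt_top.ne]
  rw [densityRatio, volume_cubeW_toReal hL.le, lt_div_iff₀ (by positivity)] at hratio
  calc b * (2 * (L + a)) ^ d = b * (1 + a / L) ^ d * (2 * L) ^ d := by
        rw [mul_assoc, ← mul_pow]
        field_simp
    _ < b' * (2 * L) ^ d := by gcongr
    _ < T.card * (volume C).toReal := hratio.trans_le hunion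

lemma IsSepPacking.le_nuSep_of_le_card (hC : IsConvexBody C) {ρ : ℝ} {Λ : Set (Euc d)}
    (hΛ : IsSepPacking ρ C Λ) {x : Euc d} {R : ℝ} {S : Finset (Euc d)}
    (hS : ∀ c ∈ S, c ∈ Λ ∧ x ∈ closedBall c R) {n : ℕ} (hn : n ≤ S.card) :
    n ≤ nuSep ρ C (closedBall 0 R) := by
  obtain ⟨S', hS'S, hS'⟩ := Finset.exists_subset_card_eq hn
  set e : Fin n ≃ S' := (S'.equivFin.trans (finCongr hS')).symm
  refine le_nuSep hC (hΛ.isFinSepPacking_sub (t := fun i => e i) (fun i => (hS _ (hS'S (e i).2)).1)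
    (Subtype.val_injective.comp e.injective) x) fun i => ?_
  rw [mem_closedBall_zero_iff, ← dist_eq_norm, dist_comm]
  exact (hS _ (hS'S (e i).2)).2

open scoped ENNReal in
lemma le_nuSep_of_lt (hd : d ≠ 0) (hC : IsConvexBody C) {ρ R : ℝ} (hR : 0 < R) {n : ℕ}
    (h : ((n : ℝ) - 1) * (volume C).toReal < deltaSep ρ C * (kappa d * R ^ d)) :
    n ≤ nuSep ρ C (closedBall 0 R) := by
  classical
  rcases Nat.eq_zero_or_pos n with rfl | hn
  · exact Nat.zero_le _
  have hball : 0 < kappa d * R ^ d := mul_pos kappa_pos (pow_pos hR d)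
  obtain ⟨Λ, hΛ, hδΛ⟩ := exists_isSepPacking_lt_packDensity hd hC
    (b := ((n : ℝ) - 1) * (volume C).toReal / (kappa d * R ^ d)) (by rwa [div_lt_iff₀ hball])
  set a := circumradius C + R
  obtain ⟨L, hL, T, hT, hcount⟩ := exists_cubeW_lt_card_mul_volume hC hΛ.1 a hδΛ
  have hTQ : ∀ c ∈ T, closedBall c R ⊆ cubeW d (L + a) := fun c hc => by
    rw [← add_assoc]
    exact closedBall_subset_cubeW (mem_cubeW_of_translateBody_subset hC.1
      (hC.2.2.mono interior_subset) (hT c hc).2)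
  have hreal : ((n - 1 : ℕ) : ℝ) * (2 * (L + a)) ^ d < T.card * (kappa d * R ^ d) := by
    rw [Nat.cast_sub hn, Nat.cast_one]
    rw [div_mul_eq_mul_div, div_lt_iff₀ hball] at hcount
    refine lt_of_mul_lt_mul_left ?_ (volume_toReal_pos hC).le
    linarith
  have hsum : ∑ c ∈ T, volume (closedBall c R) ≠ ⊤ :=
    ENNReal.sum_ne_top.2 fun _ _ => measure_closedBall_lt_top.ne
  have hlt : ((n - 1 : ℕ) : ℝ≥0∞) * volume (cubeW d (L + a)) <
      ∑ c ∈ T, volume (closedBall c R) := by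
    refine (ENNReal.toReal_lt_toReal (ENNReal.mul_ne_top (ENNReal.natCast_ne_top _)
      (volume_cubeW_ne_top _)) hsum).1 ?_
    rwa [ENNReal.toReal_mul, ENNReal.toReal_natCast,
      volume_cubeW_toReal (by linarith [circumradius_nonneg C]),
      ENNReal.toReal_sum fun _ _ => measure_closedBall_lt_top.ne,
      Finset.sum_congr rfl fun c _ => volume_closedBall_toReal c hR.le, Finset.sum_const,
      nsmul_eq_mul]
  obtain ⟨x, hx⟩ :=
    exists_lt_card_filter_mem volume T (fun _ _ => measurableSet_closedBall) hTQ hlt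
  exact hΛ.le_nuSep_of_le_card hC (x := x) (S := T.filter fun c => x ∈ closedBall c R)
    (fun c hc => ⟨(hT c (Finset.mem_filter.1 hc).1).1, (Finset.mem_filter.1 hc).2⟩) (by omega)

end Radius

lemma RSep_le_of_lt (hd : d ≠ 0) {C : Set (Euc d)} (hC : IsConvexBody C) {ρ R : ℝ} (hR : 0 < R)
    {n : ℕ} (h : ((n : ℝ) - 1) * (volume C).toReal < deltaSep ρ C * (kappa d * R ^ d)) :
    RSep ρ C n ≤ R :=
  csInf_le ⟨0, fun _ hx => hx.1.le⟩ ⟨hR, le_nuSep_of_lt hd hC hR h⟩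

lemma RSep_le_rpow (hd : d ≠ 0) {C : Set (Euc d)} (hC : IsConvexBody C) (ρ : ℝ) {n : ℕ}
    (hn : (0 : ℝ) < n) :
    RSep ρ C n ≤ ((volume C).toReal * n / (deltaSep ρ C * kappa d)) ^ ((1 : ℝ) / d) := by
  have hV := volume_toReal_pos hC
  have hδ := deltaSep_pos hd hC ρ
  have hκ := kappa_pos (d := d)
  refine RSep_le_of_lt hd hC (by positivity) ?_
  rw [one_div, Real.rpow_inv_natCast_pow (by positivity) hd]
  field_simp
  linarith

theorem stmt11_general {d n : ℕ} (hd : 2 ≤ d) (ρ : ℝ) (hρ : 1 ≤ ρ)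
    (C : Set (Euc d)) (hC : IsConvexBody C)
    (hn : (4 : ℝ) ^ d * deltaSep ρ C * ρ ^ d * circumradius C ^ d / inradius C ^ d ≤ n) :
    RSep ρ C n + ρ * circumradius C ≤
      ((volume C).toReal * n / (deltaSep ρ C * kappa d)) ^ ((1 : ℝ) / d) *
        (1 + 2 * deltaSep ρ C ^ ((1 : ℝ) / d) * ρ * circumradius C / inradius C *
          ((n : ℝ) ^ ((1 : ℝ) / d))⁻¹) := by
  have hd0 : d ≠ 0 := by omega
  have hδ := deltaSep_pos hd0 hC ρ
  have hRc := circumradius_pos hd0 hC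
  have hr := inradius_pos hd0 hC
  have hV := volume_toReal_pos hC
  have hκ := kappa_pos (d := d)
  have hρ0 : 0 < ρ := by linarith
  have hn0 : (0 : ℝ) < n := lt_of_lt_of_le (by positivity) hn
  set A := ((volume C).toReal * n / (deltaSep ρ C * kappa d)) ^ ((1 : ℝ) / d)
  have hRSep := RSep_le_rpow hd0 hC ρ hn0
  have hAW : A * deltaSep ρ C ^ ((1 : ℝ) / d) * ((n : ℝ) ^ ((1 : ℝ) / d))⁻¹ =
      ((volume C).toReal / kappa d) ^ ((1 : ℝ) / d) := by
    rw [← Real.inv_rpow hn0.le, ← Real.mul_rpow (by positivity) hδ.le,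
      ← Real.mul_rpow (by positivity) (by positivity)]
    congr 1
    field_simp
  have hrW := inradius_le hd0 hC.1
  calc RSep ρ C n + ρ * circumradius C
      ≤ A + 2 * ρ * circumradius C / inradius C * inradius C := by
        rw [div_mul_cancel₀ _ hr.ne']
        nlinarith
    _ ≤ A + 2 * ρ * circumradius C / inradius C *
          ((volume C).toReal / kappa d) ^ ((1 : ℝ) / d) := by
        gcongr
    _ = _ := by
        rw [← hAW]
        ring

/-- For `n ≥ 4^d δ_sep(ρ,C) ρ^d R(C)^d / r(C)^d` and `R = R_C(ρ, n)`:
`R + ρR(C) ≤ (vol(C)·n/(δ_sep(ρ,C)·κ_d))^{1/d} (1 + 2δ_sep(ρ,C)^{1/d} ρR(C)/(r(C) n^{1/d}))`. -/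
theorem stmt11 {d n : ℕ} (hd : 2 ≤ d) (ρ : ℝ) (hρ : 1 ≤ ρ)
    (C : Set (Euc d)) (hC : IsConvexBody C) (hsymm : C = -C)
    (hn : (4 : ℝ) ^ d * deltaSep ρ C * ρ ^ d * circumradius C ^ d / inradius C ^ d ≤ n) :
    RSep ρ C n + ρ * circumradius C ≤
      ((volume C).toReal * n / (deltaSep ρ C * kappa d)) ^ ((1 : ℝ) / d) *
        (1 + 2 * deltaSep ρ C ^ ((1 : ℝ) / d) * ρ * circumradius C / inradius C *
          ((n : ℝ) ^ ((1 : ℝ) / d))⁻¹) :=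
  stmt11_general hd ρ hρ C hC hn
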